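/- arXiv:2102.01388 — 2 statements merged into one kernel-verified Lean document; each statement's English description precedes it below -/
import Mathlib

section
/- Let $f(x,y) = (x+y+1)^4/(xy)$. Then for every $n \geq 0$, the constant term of $f^n$ equals $(4n)!/((n!)^2 (2n)!)$. -/
/-!
Since `f ^ n = (1 + x + y) ^ (4 * n) * (x * y) ^ (-n)`, the constant term of `f ^ n` is the
coefficient of `x ^ n * y ^ n` in `(1 + x + y) ^ (4 * n)`, which is the trinomial coefficient
`(4n)! / (n! * n! * (2n)!)`.
-/

/-- Laurent monomial `x^(m 0) * y^(m 1)` in the algebra of Laurent polynomials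
in two variables over `ℚ`, modeled as `AddMonoidAlgebra ℚ (Fin 2 →₀ ℤ)`. -/
noncomputable def Lmon (m : Fin 2 →₀ ℤ) : AddMonoidAlgebra ℚ (Fin 2 →₀ ℤ) :=
  AddMonoidAlgebra.single m 1

open Finset AddMonoidAlgebra Nat

theorem Nat.choose_mul_choose_mul_factorial_mul_factorial_mul_factorial {N k j : ℕ}
    (hjk : j ≤ k) (hkN : k ≤ N) :
    N.choose k * k.choose j * (j ! * (k - j)! * (N - k)!) = N ! := by
  rw [← Nat.choose_mul_factorial_mul_factorial hkN, ← Nat.choose_mul_factorial_mul_factorial hjk]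
  ring

theorem Finsupp.injective_nsmul_single_add_nsmul_single {ι : Type*} {i j : ι} (hij : i ≠ j) :
    Function.Injective fun p : ℕ × ℕ => p.1 • single i (1 : ℤ) + p.2 • single j 1 := by
  rintro ⟨p, q⟩ ⟨p', q'⟩ h
  have hi := DFunLike.congr_fun h i
  have hj := DFunLike.congr_fun h j
  simp [hij, hij.symm] at hi hj
  simp [hi, hj]

namespace AddMonoidAlgebra

variable {R G : Type*} [CommSemiring R] [AddCommMonoid G]

theorem single_add_single_add_one_pow (a b : G) (N : ℕ) :
    (single a 1 + single b 1 + 1 : R[G]) ^ N =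
      ∑ k ∈ range (N + 1), ∑ j ∈ range (k + 1),
        single (j • a + (k - j) • b) ((N.choose k * k.choose j : ℕ) : R) := by
  rw [add_pow]
  refine sum_congr rfl fun k _ => ?_
  rw [add_pow, sum_mul, sum_mul]
  refine sum_congr rfl fun j _ => ?_
  simp only [single_pow, one_pow, natCast_def, one_def, single_mul_single]
  simp [mul_comm]

theorem coeff_single_add_single_add_one_pow {a b : G}
    (hab : Function.Injective fun p : ℕ × ℕ => p.1 • a + p.2 • b) (N p q : ℕ) :
    ((single a 1 + single b 1 + 1 : R[G]) ^ N).coeff (p • a + q • b) =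
      ((N.choose (p + q) * (p + q).choose p : ℕ) : R) := by
  classical
  have hexponent : ∀ k, ∀ j ∈ range (k + 1),
      (j • a + (k - j) • b = p • a + q • b ↔ k = p + q ∧ j = p) := by
    intro k j hj
    have hjk : j ≤ k := Nat.lt_succ_iff.mp (mem_range.mp hj)
    refine ⟨fun h => ?_, ?_⟩
    · have := @hab (j, k - j) (p, q) h
      simp only [Prod.mk.injEq] at this
      omega
    · rintro ⟨rfl, rfl⟩
      simp
  rw [single_add_single_add_one_pow]
  simp only [coeff_sum, Finsupp.finsetSum_apply, coeff_single]
  calc _ = ∑ k ∈ range (N + 1), ∑ j ∈ range (k + 1),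
        if k = p + q ∧ j = p then ((N.choose k * k.choose j : ℕ) : R) else 0 := by
        refine sum_congr rfl fun k _ => sum_congr rfl fun j hj => ?_
        rw [Finsupp.single_apply, if_congr (hexponent k j hj) rfl rfl]
    _ = _ := by simp +contextual [ite_and, sum_ite_irrel, Nat.choose_eq_zero_of_lt]

end AddMonoidAlgebra

/-- For `f = (x+y+1)^4/(xy)`, the constant term of `f^n` is `(4n)!/((n!)^2 (2n)!)`. -/
theorem constant_term_quartic_dP2 (n : ℕ)
    (f : AddMonoidAlgebra ℚ (Fin 2 →₀ ℤ))
    (hf : f = (Lmon (Finsupp.single 0 1) + Lmon (Finsupp.single 1 1) + 1) ^ 4 *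
      Lmon (-(Finsupp.single 0 1 + Finsupp.single 1 1))) :
    ((f ^ n).coeff (0 : Fin 2 →₀ ℤ)) * ((n.factorial : ℚ) ^ 2 * ((2 * n).factorial : ℚ)) =
      ((4 * n).factorial : ℚ) := by
  set x : Fin 2 →₀ ℤ := Finsupp.single 0 1
  set y : Fin 2 →₀ ℤ := Finsupp.single 1 1
  have hconst : (f ^ n).coeff 0 =
      ((single x 1 + single y 1 + 1 : ℚ[Fin 2 →₀ ℤ]) ^ (4 * n)).coeff (n • x + n • y) := by
    rw [hf, Lmon, Lmon, Lmon, mul_pow, ← pow_mul, single_pow, coeff_mul_single_apply]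
    simp [smul_add]
  rw [hconst, coeff_single_add_single_add_one_pow
    (Finsupp.injective_nsmul_single_add_nsmul_single Fin.zero_ne_one)]
  have htrinomial := Nat.choose_mul_choose_mul_factorial_mul_factorial_mul_factorial
    (N := 4 * n) (k := 2 * n) (j := n) (by omega) (by omega)
  rw [show 2 * n - n = n by omega, show 4 * n - 2 * n = 2 * n by omega] at htrinomial
  rw [← two_mul, ← htrinomial]
  push_cast
  ring
end

section
/- Let $f(x,y) = (x+y+1)^6/(x y^2)$. Then for every $n \geq 0$, the constant term of $f^n$ equals $(6n)!/(n!\,(2n)!\,(3n)!)$. -/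
open Finsupp

lemma Lmon_add (m m' : Fin 2 →₀ ℤ) : Lmon (m + m') = Lmon m * Lmon m' := by
  simp [Lmon, AddMonoidAlgebra.single_mul_single]

lemma Lmon_pow (m : Fin 2 →₀ ℤ) (k : ℕ) : Lmon m ^ k = Lmon (k • m) := by
  simp [Lmon, AddMonoidAlgebra.single_pow]

lemma coeff_mul_Lmon (g : AddMonoidAlgebra ℚ (Fin 2 →₀ ℤ)) (m a : Fin 2 →₀ ℤ) :
    (g * Lmon m).coeff a = g.coeff (a - m) := by
  simp [Lmon, sub_eq_add_neg]

lemma coeff_mul_natCast (g : AddMonoidAlgebra ℚ (Fin 2 →₀ ℤ)) (c : ℕ) (a : Fin 2 →₀ ℤ) :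
    (g * c).coeff a = g.coeff a * c := by
  simp [AddMonoidAlgebra.natCast_def]

lemma single_zero_add_single_one_inj {a b c d : ℤ} :
    single (0 : Fin 2) a + single 1 b = single 0 c + single 1 d ↔ a = c ∧ b = d := by
  simp [Finsupp.ext_iff, Fin.forall_fin_two]

lemma coeff_X_add_Y_pow (i p q : ℕ) :
    ((Lmon (single 0 1) + Lmon (single 1 1)) ^ i).coeff (single 0 (p : ℤ) + single 1 (q : ℤ)) =
      if p + q = i then (i.choose p : ℚ) else 0 := by
  have hmon (k : ℕ) : Lmon (single 0 1) ^ k * Lmon (single 1 1) ^ (i - k) =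
      Lmon (single 0 (k : ℤ) + single 1 ((i - k : ℕ) : ℤ)) := by
    simp [Lmon_pow, Lmon_add]
  have hterm (k : ℕ) : (Lmon (single 0 1) ^ k * Lmon (single 1 1) ^ (i - k) * (i.choose k : _)).coeff
      (single 0 (p : ℤ) + single 1 (q : ℤ)) = if k = p ∧ i - k = q then (i.choose k : ℚ) else 0 := by
    rw [hmon, coeff_mul_natCast, Lmon, AddMonoidAlgebra.coeff_single, single_apply]
    simp only [single_zero_add_single_one_inj, Nat.cast_inj, ite_mul, one_mul, zero_mul]
  rw [add_pow, AddMonoidAlgebra.coeff_sum, Finsupp.finsetSum_apply]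
  simp only [hterm, ite_and, Finset.sum_ite_eq', Finset.mem_range]
  split_ifs <;> first | rfl | omega

lemma coeff_X_add_Y_add_one_pow {N p q : ℕ} (h : p + q ≤ N) :
    ((Lmon (single 0 1) + Lmon (single 1 1) + 1) ^ N).coeff (single 0 (p : ℤ) + single 1 (q : ℤ)) =
      N.choose (p + q) * (p + q).choose p := by
  rw [add_pow, AddMonoidAlgebra.coeff_sum, Finsupp.finsetSum_apply]
  simp only [one_pow, mul_one, coeff_mul_natCast, coeff_X_add_Y_pow, ite_mul, zero_mul,
    Finset.sum_ite_eq, Finset.mem_range]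
  rw [if_pos (by omega), mul_comm]

lemma Nat.choose_mul_choose_mul_factorial_mul_factorial_mul_factorial_s2 (a b c : ℕ) :
    (a + b + c).choose (a + b) * (a + b).choose a * (a.factorial * b.factorial * c.factorial) =
      (a + b + c).factorial := by
  rw [← Nat.add_choose_mul_factorial_mul_factorial (a + b) c,
    ← Nat.add_choose_mul_factorial_mul_factorial a b, Nat.choose_symm_add, Nat.choose_symm_add]
  ring

lemma coeff_X_add_Y_add_one_pow_mul_factorial (p q r : ℕ) :
    ((Lmon (single 0 1) + Lmon (single 1 1) + 1) ^ (p + q + r)).coeff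
        (single 0 (p : ℤ) + single 1 (q : ℤ)) * (p.factorial * q.factorial * r.factorial : ℚ) =
      (p + q + r).factorial := by
  rw [coeff_X_add_Y_add_one_pow (by omega),
    ← Nat.choose_mul_choose_mul_factorial_mul_factorial_mul_factorial_s2 p q r]
  push_cast
  ring

/-- For `f = (x+y+1)^6/(x y^2)`, the constant term of `f^n` is `(6n)!/(n! (2n)! (3n)!)`. -/
theorem constant_term_sextic_dP1 (n : ℕ)
    (f : AddMonoidAlgebra ℚ (Fin 2 →₀ ℤ))
    (hf : f = (Lmon (Finsupp.single 0 1) + Lmon (Finsupp.single 1 1) + 1) ^ 6 *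
      Lmon (-(Finsupp.single 0 1 + Finsupp.single 1 2))) :
    ((f ^ n).coeff (0 : Fin 2 →₀ ℤ)) *
        ((n.factorial : ℚ) * ((2 * n).factorial : ℚ) * ((3 * n).factorial : ℚ)) =
      ((6 * n).factorial : ℚ) := by
  have hexp : n • -(single (0 : Fin 2) (1 : ℤ) + single 1 2) =
      -(single 0 (n : ℤ) + single 1 ((2 * n : ℕ) : ℤ)) := by
    ext i
    fin_cases i <;> simp [mul_comm]
  have hpow : f ^ n = (Lmon (single 0 1) + Lmon (single 1 1) + 1) ^ (n + 2 * n + 3 * n) *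
      Lmon (-(single 0 (n : ℤ) + single 1 ((2 * n : ℕ) : ℤ))) := by
    rw [hf, mul_pow, ← pow_mul, Lmon_pow, hexp, show 6 * n = n + 2 * n + 3 * n by ring]
  rw [hpow, coeff_mul_Lmon, zero_sub, neg_neg, coeff_X_add_Y_add_one_pow_mul_factorial,
    show n + 2 * n + 3 * n = 6 * n by ring]
end
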